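/- Let M₀ = D₀ − A₀ be the standard splitting of an SDDM matrix M₀ with condition number κ = λ_max(M₀)/λ_min(M₀), and let d = ⌈log₂(2 ln(2^{1/3}/(2^{1/3} − 1)) · κ)⌉. Then there exists ε_d with 0 ≤ ε_d < (1/3)·ln 2 such that e^{−ε_d} D₀ ⪯ D₀ − D₀(D₀⁻¹A₀)^{2^d} ⪯ e^{ε_d} D₀, i.e., D₀ ≈_{ε_d} D₀ − D₀(D₀⁻¹A₀)^{2^d}. -/

import Mathlib

open Matrix

/-- Loewner order: `X ⪯ Y` iff `Y - X` is positive semidefinite. -/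
def LoewnerLE {k : Type*} [Fintype k] (X Y : Matrix k k ℝ) : Prop := (Y - X).PosSemidef

/-- `X ≈_α Y` iff `e^{-α} X ⪯ Y ⪯ e^{α} X` in the Loewner order. -/
def MApprox {k : Type*} [Fintype k] (α : ℝ) (X Y : Matrix k k ℝ) : Prop :=
  LoewnerLE (Real.exp (-α) • X) Y ∧ LoewnerLE Y (Real.exp α • X)

/-- An `n × n` real symmetric matrix is SDDM if it is positive definite, has nonpositive
off-diagonal entries, and is diagonally dominant: `M i i ≥ ∑_{j ≠ i} |M i j|`. -/
def IsSDDM {n : ℕ} (M : Matrix (Fin n) (Fin n) ℝ) : Prop :=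
  M.PosDef ∧ (∀ i j, i ≠ j → M i j ≤ 0) ∧
    ∀ i, ∑ j ∈ Finset.univ.erase i, |M i j| ≤ M i i

/-!
Write `D` for the diagonal of `M`, `A = D - M ≥ 0` and `B = D^{-1/2} A D^{-1/2}`, so that
`D (D⁻¹ A)^k = D^{1/2} B^k D^{1/2}`. Since `λ_min ≤ M` and `D ≤ λ_max`, conjugating by
`D^{-1/2}` gives `B ⪯ (1 - 1/κ) I`. Replacing `x` by `|x|` in the quadratic form shows that the
matrix `D + A`, with the off-diagonal signs of `M` flipped, is also `⪰ λ_min`, whence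
`-(1 - 1/κ) I ⪯ B`. For the even exponent `k = 2^d` the functional calculus then gives
`0 ⪯ B^k ⪯ (1 - 1/κ)^k I ⪯ e^{-k/κ} I ⪯ e^{-2c} I`, where `c = ln(w/(w-1))`,
`w = 2^{1/3}`, and `k ≥ 2cκ` by the choice of `d`. So `(1 - e^{-2c}) D ⪯ D - D (D⁻¹ A)^k ⪯ D`, and
`ε = -ln(1 - e^{-2c})` works; it is below `ln w` because `e^{-2c} < e^{-c} = 1 - 1/w`.
-/

open Real
open scoped MatrixOrder

lemma pow_mem_Icc_of_mem_Icc {A : Type*} [TopologicalSpace A] [Ring A] [StarRing A]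
    [PartialOrder A] [StarOrderedRing A] [Algebra ℝ A] [StarModule ℝ A]
    [ContinuousFunctionalCalculus ℝ A IsSelfAdjoint] [NonnegSpectrumClass ℝ A]
    {a : A} {s : ℝ} (h : a ∈ Set.Icc (algebraMap ℝ A (-s)) (algebraMap ℝ A s))
    {k : ℕ} (hk : Even k) : a ^ k ∈ Set.Icc 0 (algebraMap ℝ A (s ^ k)) := by
  have ha : IsSelfAdjoint a := by
    simpa using
      (IsSelfAdjoint.algebraMap A (.all s)).sub (IsSelfAdjoint.of_nonneg (sub_nonneg.2 h.2))
  have hspec : ∀ x ∈ spectrum ℝ a, |x| ≤ s := fun x hx =>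
    abs_le.2 ⟨(algebraMap_le_iff_le_spectrum ha).1 h.1 x hx,
      (le_algebraMap_iff_spectrum_le ha).1 h.2 x hx⟩
  rw [← cfc_pow_id (R := ℝ) a k ha]
  exact ⟨cfc_nonneg fun x _ => hk.pow_nonneg x, cfc_le_algebraMap _ _ _ fun x hx =>
    hk.pow_abs x ▸ pow_le_pow_left₀ (abs_nonneg x) (hspec x hx) k⟩

namespace Real

lemma le_two_pow_ceil_logb {y : ℝ} (hy : 0 < y) : y ≤ 2 ^ ⌈logb 2 y⌉₊ := by
  calc y = 2 ^ logb 2 y := (rpow_logb two_pos (by norm_num) hy).symm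
    _ ≤ 2 ^ (⌈logb 2 y⌉₊ : ℝ) := rpow_le_rpow_of_exponent_le one_le_two (Nat.le_ceil _)
    _ = 2 ^ ⌈logb 2 y⌉₊ := rpow_natCast _ _

lemma one_sub_inv_pow_le_exp_neg {κ c : ℝ} (hκ : 1 ≤ κ) {k : ℕ} (hk : c * κ ≤ k) :
    (1 - κ⁻¹) ^ k ≤ exp (-c) :=
  calc (1 - κ⁻¹) ^ k ≤ exp (-κ⁻¹) ^ k :=
        pow_le_pow_left₀ (sub_nonneg.2 (inv_le_one_of_one_le₀ hκ)) (one_sub_le_exp_neg _) k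
    _ = exp (-(k * κ⁻¹)) := by rw [← exp_nat_mul, mul_neg]
    _ ≤ exp (-c) := exp_le_exp.2 (neg_le_neg ((le_mul_inv_iff₀ (by linarith)).2 hk))

lemma half_lt_log_div_sub_one {w : ℝ} (hw1 : 1 < w) (hw2 : w ≤ 2) :
    1 / 2 < log (w / (w - 1)) :=
  calc 1 / 2 < log 2 := by linarith [log_two_gt_d9]
    _ ≤ log (w / (w - 1)) := log_le_log two_pos (by rw [le_div_iff₀ (by linarith)]; linarith)

lemma neg_log_one_sub_exp_neg_two_mul_log_lt {w : ℝ} (hw : 1 < w) :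
    -log (1 - exp (-(2 * log (w / (w - 1))))) < log w := by
  have hq : exp (-log (w / (w - 1))) = 1 - w⁻¹ := by
    rw [exp_neg, exp_log (div_pos (by linarith) (by linarith)), inv_div]
    field_simp
  have hw' : 0 < w⁻¹ := inv_pos.2 (by linarith)
  have hw'' : w⁻¹ < 1 := inv_lt_one_of_one_lt₀ hw
  have h2 : exp (-(2 * log (w / (w - 1)))) = (1 - w⁻¹) ^ 2 := by
    rw [← hq, ← exp_nat_mul]
    ring_nf
  rw [h2, neg_lt, ← log_inv]
  exact log_lt_log hw' (by nlinarith)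

end Real

namespace Matrix

section

variable {ι : Type*} [DecidableEq ι]

noncomputable def sqrtDiagonal (d : ι → ℝ) : Matrix ι ι ℝ := diagonal fun i => √(d i)

noncomputable def invSqrtDiagonal (d : ι → ℝ) : Matrix ι ι ℝ :=
  diagonal fun i => (√(d i))⁻¹

lemma isSelfAdjoint_sqrtDiagonal (d : ι → ℝ) : IsSelfAdjoint (sqrtDiagonal d) :=
  isHermitian_diagonal _

lemma isSelfAdjoint_invSqrtDiagonal (d : ι → ℝ) : IsSelfAdjoint (invSqrtDiagonal d) :=
  isHermitian_diagonal _

end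

variable {ι : Type*} [Fintype ι]

lemma neg_abs_dotProduct_mulVec_abs_le {A : Matrix ι ι ℝ} (hA : ∀ i j, 0 ≤ A i j)
    (x : ι → ℝ) :
    -(|x| ⬝ᵥ (A *ᵥ |x|)) ≤ x ⬝ᵥ (A *ᵥ x) := by
  simp only [dotProduct, mulVec, Finset.mul_sum, ← Finset.sum_neg_distrib, Pi.abs_apply]
  gcongr with i _ j _
  calc -(|x i| * (A i j * |x j|)) = -|x i * (A i j * x j)| := by
        rw [abs_mul, abs_mul, abs_of_nonneg (hA i j)]
    _ ≤ x i * (A i j * x j) := neg_abs_le _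

variable [DecidableEq ι]

lemma algebraMap_le_diagonal_iff {r : ℝ} {f : ι → ℝ} :
    algebraMap ℝ (Matrix ι ι ℝ) r ≤ diagonal f ↔ ∀ i, r ≤ f i := by
  simp only [le_iff, algebraMap_eq_diagonal, diagonal_sub, posSemidef_diagonal_iff, sub_nonneg]
  rfl

lemma algebraMap_le_algebraMap_of_le {r s : ℝ} (h : r ≤ s) :
    algebraMap ℝ (Matrix ι ι ℝ) r ≤ algebraMap ℝ _ s := by
  rw [algebraMap_eq_diagonal s]
  exact algebraMap_le_diagonal_iff.2 fun _ => h

lemma le_diag_of_algebraMap_le {A : Matrix ι ι ℝ} {r : ℝ} (h : algebraMap ℝ _ r ≤ A)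
    (i : ι) : r ≤ A i i := by
  simpa [algebraMap_eq_diagonal, sub_nonneg] using (le_iff.1 h).diag_nonneg (i := i)

lemma diag_le_of_le_algebraMap {A : Matrix ι ι ℝ} {r : ℝ} (h : A ≤ algebraMap ℝ _ r)
    (i : ι) : A i i ≤ r := by
  simpa [algebraMap_eq_diagonal, sub_nonneg] using (le_iff.1 h).diag_nonneg (i := i)

lemma IsHermitian.algebraMap_le_of_forall_le_eigenvalues {A : Matrix ι ι ℝ} (hA : A.IsHermitian)
    {r : ℝ} (h : ∀ i, r ≤ hA.eigenvalues i) : algebraMap ℝ _ r ≤ A := by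
  refine algebraMap_le_of_le_spectrum ?_ hA.isSelfAdjoint
  rw [hA.spectrum_real_eq_range_eigenvalues]
  rintro _ ⟨i, rfl⟩
  exact h i

lemma IsHermitian.le_algebraMap_of_forall_eigenvalues_le {A : Matrix ι ι ℝ} (hA : A.IsHermitian)
    {r : ℝ} (h : ∀ i, hA.eigenvalues i ≤ r) : A ≤ algebraMap ℝ _ r := by
  refine le_algebraMap_of_spectrum_le ?_ hA.isSelfAdjoint
  rw [hA.spectrum_real_eq_range_eigenvalues]
  rintro _ ⟨i, rfl⟩
  exact h i

lemma dotProduct_diagonal_mulVec_abs (d x : ι → ℝ) :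
    |x| ⬝ᵥ (diagonal d *ᵥ |x|) = x ⬝ᵥ (diagonal d *ᵥ x) := by
  simp only [mulVec_diagonal, dotProduct, Pi.abs_apply]
  congr 1 with i
  rw [mul_left_comm, abs_mul_abs_self, mul_left_comm]

lemma PosSemidef.diagonal_add_of_diagonal_sub {d : ι → ℝ} {A : Matrix ι ι ℝ}
    (hA : ∀ i j, 0 ≤ A i j) (h : (diagonal d - A).PosSemidef) :
    (diagonal d + A).PosSemidef := by
  have hAh : A.IsHermitian := by
    simpa using (isHermitian_diagonal d).sub h.isHermitian
  refine .of_dotProduct_mulVec_nonneg ((isHermitian_diagonal d).add hAh) fun x => ?_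
  have := h.dotProduct_mulVec_nonneg |x|
  simp only [star_trivial, add_mulVec, sub_mulVec, dotProduct_add, dotProduct_sub,
    dotProduct_diagonal_mulVec_abs] at this ⊢
  linarith [neg_abs_dotProduct_mulVec_abs_le hA x]

lemma algebraMap_le_diagonal_add_of_le_diagonal_sub {d : ι → ℝ} {A : Matrix ι ι ℝ}
    (hA : ∀ i j, 0 ≤ A i j) {r : ℝ} (h : algebraMap ℝ _ r ≤ diagonal d - A) :
    algebraMap ℝ _ r ≤ diagonal d + A := by
  rw [le_iff, algebraMap_eq_diagonal] at h ⊢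
  rw [sub_right_comm, diagonal_sub] at h
  rw [add_sub_right_comm, diagonal_sub]
  exact h.diagonal_add_of_diagonal_sub hA

section sqrtDiagonal

variable {d : ι → ℝ}

lemma sqrtDiagonal_mul_self (hd : ∀ i, 0 ≤ d i) :
    sqrtDiagonal d * sqrtDiagonal d = diagonal d := by
  simp [sqrtDiagonal, diagonal_mul_diagonal, mul_self_sqrt (hd _)]

lemma sqrtDiagonal_mul_invSqrtDiagonal (hd : ∀ i, 0 < d i) :
    sqrtDiagonal d * invSqrtDiagonal d = 1 := by
  rw [sqrtDiagonal, invSqrtDiagonal, diagonal_mul_diagonal, ← diagonal_one]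
  congr 1 with i
  exact mul_inv_cancel₀ (sqrt_pos.2 (hd i)).ne'

lemma invSqrtDiagonal_mul_sqrtDiagonal (hd : ∀ i, 0 < d i) :
    invSqrtDiagonal d * sqrtDiagonal d = 1 := by
  rw [sqrtDiagonal, invSqrtDiagonal, diagonal_mul_diagonal, ← diagonal_one]
  congr 1 with i
  exact inv_mul_cancel₀ (sqrt_pos.2 (hd i)).ne'

lemma invSqrtDiagonal_mul_diagonal_mul_invSqrtDiagonal (hd : ∀ i, 0 < d i) :
    invSqrtDiagonal d * diagonal d * invSqrtDiagonal d = 1 := by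
  rw [← sqrtDiagonal_mul_self fun i => (hd i).le, ← mul_assoc,
    invSqrtDiagonal_mul_sqrtDiagonal hd, one_mul, sqrtDiagonal_mul_invSqrtDiagonal hd]

lemma algebraMap_div_le_invSqrtDiagonal_conj (hd : ∀ i, 0 < d i) {b : ℝ}
    (hdb : ∀ i, d i ≤ b) {a : ℝ} (ha : 0 ≤ a) {X : Matrix ι ι ℝ} (hX : algebraMap ℝ _ a ≤ X) :
    algebraMap ℝ _ (a / b) ≤ invSqrtDiagonal d * X * invSqrtDiagonal d := by
  have hconj : invSqrtDiagonal d * algebraMap ℝ _ a * invSqrtDiagonal d =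
      diagonal fun i => a / d i := by
    simp only [invSqrtDiagonal, algebraMap_eq_diagonal, diagonal_mul_diagonal]
    congr 1 with i
    rw [mul_right_comm, ← mul_inv, mul_self_sqrt (hd i).le, div_eq_mul_inv]
    exact mul_comm _ _
  calc algebraMap ℝ _ (a / b) ≤ diagonal fun i => a / d i :=
        algebraMap_le_diagonal_iff.2 fun i => div_le_div_of_nonneg_left ha (hd i) (hdb i)
    _ = invSqrtDiagonal d * algebraMap ℝ _ a * invSqrtDiagonal d := hconj.symm
    _ ≤ invSqrtDiagonal d * X * invSqrtDiagonal d :=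
        (isSelfAdjoint_invSqrtDiagonal d).conjugate_le_conjugate hX

end sqrtDiagonal

lemma mul_self_mul_inv_mul_pow_eq {α : Type*} [CommRing α] {R C : Matrix ι ι α}
    (hRC : R * C = 1) (hCR : C * R = 1) (A : Matrix ι ι α) (k : ℕ) :
    R * R * ((R * R)⁻¹ * A) ^ k = R * (C * A * C) ^ k * R := by
  let u : (Matrix ι ι α)ˣ := ⟨R, C, hRC, hCR⟩
  have hinv : (R * R)⁻¹ = C * C := inv_eq_left_inv (by simp [mul_assoc, ← mul_assoc C R, hCR])
  rw [hinv, show C * C * A = C * (C * A * C) * R by simp [mul_assoc, hCR]]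
  rw [show (C * (C * A * C) * R) ^ k = C * (C * A * C) ^ k * R from u.conj_pow' _ k]
  simp only [← mul_assoc]
  rw [mul_assoc R R C, hRC, mul_one]

lemma invSqrtDiagonal_conj_diagonal_sub_mem_Icc {M : Matrix ι ι ℝ}
    (hoff : ∀ i j, i ≠ j → M i j ≤ 0) {lmin lmax : ℝ} (hlmin : 0 ≤ lmin)
    (hlo : algebraMap ℝ _ lmin ≤ M) (hd : ∀ i, 0 < M i i) (hhi : ∀ i, M i i ≤ lmax) :
    invSqrtDiagonal M.diag * (diagonal M.diag - M) * invSqrtDiagonal M.diag ∈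
      Set.Icc (algebraMap ℝ _ (-(1 - lmin / lmax))) (algebraMap ℝ _ (1 - lmin / lmax)) := by
  set C := invSqrtDiagonal M.diag
  have hCDC : C * diagonal M.diag * C = 1 := invSqrtDiagonal_mul_diagonal_mul_invSqrtDiagonal hd
  have hA : ∀ i j, 0 ≤ (diagonal M.diag - M) i j := by
    intro i j
    rcases eq_or_ne i j with rfl | hij
    · simp
    · simpa [diagonal_apply_ne _ hij] using hoff i j hij
  have hflip : algebraMap ℝ _ lmin ≤ diagonal M.diag + (diagonal M.diag - M) :=
    algebraMap_le_diagonal_add_of_le_diagonal_sub hA (by rwa [sub_sub_cancel])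
  constructor
  · have h := algebraMap_div_le_invSqrtDiagonal_conj (d := M.diag) hd hhi hlmin hflip
    rw [mul_add, add_mul, hCDC] at h
    calc algebraMap ℝ _ (-(1 - lmin / lmax)) = algebraMap ℝ _ (lmin / lmax) - 1 := by simp
      _ ≤ 1 + C * (diagonal M.diag - M) * C - 1 := sub_le_sub_right h 1
      _ = _ := add_sub_cancel_left _ _
  · have h := algebraMap_div_le_invSqrtDiagonal_conj (d := M.diag) hd hhi hlmin hlo
    calc C * (diagonal M.diag - M) * C = 1 - C * M * C := by rw [mul_sub, sub_mul, hCDC]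
      _ ≤ 1 - algebraMap ℝ _ (lmin / lmax) := sub_le_sub_left h 1
      _ = _ := by simp

theorem mApprox_diagonal_sub_mul_inv_mul_pow {M : Matrix ι ι ℝ}
    (hoff : ∀ i j, i ≠ j → M i j ≤ 0) {lmin lmax : ℝ} (hlmin : 0 < lmin)
    (hlo : algebraMap ℝ _ lmin ≤ M) (hhi : M ≤ algebraMap ℝ _ lmax) {k : ℕ} (hk : Even k)
    {ε : ℝ} (hε : 0 ≤ ε) (hεk : exp (-ε) ≤ 1 - (1 - lmin / lmax) ^ k) :
    MApprox ε (diagonal M.diag)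
      (diagonal M.diag -
        diagonal M.diag * ((diagonal M.diag)⁻¹ * (diagonal M.diag - M)) ^ k) := by
  have hd : ∀ i, 0 < M i i := fun i => hlmin.trans_le (le_diag_of_algebraMap_le hlo i)
  set R := sqrtDiagonal M.diag
  set B := invSqrtDiagonal M.diag * (diagonal M.diag - M) * invSqrtDiagonal M.diag
  obtain ⟨hBk_nonneg, hBk_le⟩ := pow_mem_Icc_of_mem_Icc
    (invSqrtDiagonal_conj_diagonal_sub_mem_Icc hoff hlmin.le hlo hd (diag_le_of_le_algebraMap hhi))
    hk
  have hsmul (r : ℝ) : r • (R * R) = R * algebraMap ℝ _ r * R := by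
    simp [Algebra.algebraMap_eq_smul_one]
  have hRR : R * R = diagonal M.diag := sqrtDiagonal_mul_self fun i => (hd i).le
  have hpow : diagonal M.diag * ((diagonal M.diag)⁻¹ * (diagonal M.diag - M)) ^ k =
      R * B ^ k * R := by
    rw [← mul_self_mul_inv_mul_pow_eq (sqrtDiagonal_mul_invSqrtDiagonal (d := M.diag) hd)
      (invSqrtDiagonal_mul_sqrtDiagonal hd), hRR]
  rw [hpow, ← hRR,
    show R * R - R * B ^ k * R = R * (1 - B ^ k) * R by simp [mul_sub, sub_mul]]
  refine ⟨?_, ?_⟩ <;> simp only [LoewnerLE, ← le_iff, hsmul] <;>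
    refine (isSelfAdjoint_sqrtDiagonal M.diag).conjugate_le_conjugate ?_
  · calc algebraMap ℝ _ (exp (-ε)) ≤ algebraMap ℝ _ (1 - (1 - lmin / lmax) ^ k) :=
          algebraMap_le_algebraMap_of_le hεk
      _ = 1 - algebraMap ℝ _ ((1 - lmin / lmax) ^ k) := by simp
      _ ≤ 1 - B ^ k := sub_le_sub_left hBk_le 1
  · calc 1 - B ^ k ≤ 1 := sub_le_self _ hBk_nonneg
      _ = algebraMap ℝ _ 1 := (map_one _).symm
      _ ≤ algebraMap ℝ _ (exp ε) := algebraMap_le_algebraMap_of_le (one_le_exp hε)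

end Matrix

/-- For the standard splitting `M₀ = D₀ − A₀` of an SDDM matrix with condition number `κ`,
taking `d = ⌈log₂(2 ln(2^{1/3}/(2^{1/3} − 1)) κ)⌉`, there exists `ε_d < (1/3) ln 2` with
`D₀ ≈_{ε_d} D₀ − D₀ (D₀⁻¹ A₀)^(2^d)`. -/
theorem chain_length_bound {n : ℕ}
    {M : Matrix (Fin n) (Fin n) ℝ} (hM : IsSDDM M) (hHerm : M.IsHermitian)
    {lmax lmin κ : ℝ}
    (hmax : IsGreatest (Set.range hHerm.eigenvalues) lmax)
    (hmin : IsLeast (Set.range hHerm.eigenvalues) lmin)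
    (hκ : κ = lmax / lmin)
    {d : ℕ}
    (hd : d = ⌈Real.logb 2
      (2 * Real.log ((2 : ℝ) ^ ((1 : ℝ) / 3) / ((2 : ℝ) ^ ((1 : ℝ) / 3) - 1)) * κ)⌉₊) :
    ∃ εd : ℝ, 0 ≤ εd ∧ εd < Real.log 2 / 3 ∧
      MApprox εd (Matrix.diagonal fun i => M i i)
        (Matrix.diagonal (fun i => M i i) -
          Matrix.diagonal (fun i => M i i) *
            ((Matrix.diagonal fun i => M i i)⁻¹ *
              (Matrix.diagonal (fun i => M i i) - M)) ^ (2 ^ d)) := by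
  obtain ⟨hPD, hoff, -⟩ := hM
  obtain ⟨i₀, hi₀⟩ := hmin.1
  have hlmin : 0 < lmin := hi₀ ▸ hPD.eigenvalues_pos i₀
  have hκ1 : 1 ≤ κ := hκ ▸ (one_le_div hlmin).2 (hmax.2 ⟨i₀, hi₀⟩)
  set w : ℝ := 2 ^ ((1 : ℝ) / 3)
  have hw1 : 1 < w := one_lt_rpow one_lt_two (by norm_num)
  set c := log (w / (w - 1))
  have hc : 1 / 2 < c :=
    half_lt_log_div_sub_one hw1 (rpow_le_self_of_one_le one_le_two (by norm_num))
  have hk : 2 * c * κ ≤ 2 ^ d := hd ▸ le_two_pow_ceil_logb (by positivity)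
  have hd0 : d ≠ 0 := hd ▸ (Nat.ceil_pos.2 (logb_pos one_lt_two (by nlinarith))).ne'
  have ht : 0 < 1 - exp (-(2 * c)) := sub_pos.2 (exp_lt_one_iff.2 (by linarith))
  have hε : 0 ≤ -log (1 - exp (-(2 * c))) :=
    neg_nonneg.2 (log_nonpos ht.le (sub_le_self _ (exp_pos _).le))
  refine ⟨_, hε, (neg_log_one_sub_exp_neg_two_mul_log_lt hw1).trans_eq ?_,
    mApprox_diagonal_sub_mul_inv_mul_pow hoff hlmin
      (hHerm.algebraMap_le_of_forall_le_eigenvalues fun i => hmin.2 ⟨i, rfl⟩)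
      (hHerm.le_algebraMap_of_forall_eigenvalues_le fun i => hmax.2 ⟨i, rfl⟩)
      (Nat.even_pow.2 ⟨even_two, hd0⟩) hε ?_⟩
  · rw [log_rpow two_pos]
    ring
  · rw [neg_neg, exp_log ht, sub_le_sub_iff_left, ← inv_div, ← hκ]
    exact one_sub_inv_pow_le_exp_neg hκ1 (by exact_mod_cast hk)
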